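/- arXiv:2603.27166 — 2 statements merged into one kernel-verified Lean document; each statement's English description precedes it below -/
import Mathlib

section
/- Let R be a commutative noetherian ring, ℰ a thick subcategory of D^pf(R), and π : D^b(R) → D^b(R)/ℰ the Verdier quotient functor. Define ℰ̃ = {T ∈ D^b(R) : Hom_{D^b(R)/ℰ}(πT, πP) = 0 for all perfect P}. Then ℰ̃ is a thick subcategory of D^b(R) containing ℰ, and ℰ̃ ∩ D^pf(R) = ℰ. -/
/-!
`ℰ̃` is the intersection of `D^b(R)` with the preimage, under the Verdier quotient functor `π`
(a triangulated functor), of the left orthogonal of `π(D^pf(R))`. A left orthogonal of a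
shift-closed class is thick, and so are preimages of thick subcategories under triangulated
functors and intersections of thick subcategories; this gives thickness of `ℰ̃`.

The objects killed by `π` are exactly those of the thick subcategory `ℰ`: if `π(𝟙_T) = 0`, then
some `s : T ⟶ Z` with cone `C ∈ ℰ` satisfies `s = 0`, and the cone of a zero map contains
`T⟦1⟧` as a direct summand. Hence `ℰ ⊆ ℰ̃`, and a perfect `T ∈ ℰ̃` has `Hom(πT, πT) = 0`,
so `πT = 0` and `T ∈ ℰ`.
-/

open CategoryTheory Limits Pretriangulated ZeroObject

noncomputable section

namespace ProxyPaper

/-- We fix, once and for all, a derived category structure on `ModuleCat R`. -/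
instance hasDC (R : Type) [CommRing R] : HasDerivedCategory (ModuleCat.{0} R) :=
  HasDerivedCategory.standard _

/-- The (unbounded) derived category of `R`-modules. The bounded derived category `D^b(R)`
of finitely generated modules is identified with the full subcategory of objects with
bounded, finitely generated cohomology (see `IsDb`). -/
abbrev D (R : Type) [CommRing R] := DerivedCategory (ModuleCat.{0} R)

variable {R : Type} [CommRing R]

/-- The `i`-th cohomology module of an object of the derived category. -/
abbrev hmod (X : D R) (i : ℤ) : ModuleCat R :=
  (DerivedCategory.homologyFunctor (ModuleCat.{0} R) i).obj X

/-- The object of the derived category given by a module placed in degree `0`. -/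
abbrev sing (M : ModuleCat.{0} R) : D R :=
  (DerivedCategory.singleFunctor (ModuleCat.{0} R) 0).obj M

/-- Membership in `D^b(R)`: bounded cohomology, all cohomology modules finitely generated. -/
def IsDb (X : D R) : Prop :=
  (∃ a b : ℤ, ∀ i : ℤ, (i < a ∨ b < i) → IsZero (hmod X i)) ∧
    ∀ i : ℤ, Module.Finite R (hmod X i)

/-- A set of objects is a triangulated subcategory: contains `0`, closed under isomorphism,
shifts, and extensions. -/
def IsTriangulatedSet (S : Set (D R)) : Prop :=
  (0 : D R) ∈ S ∧
  (∀ ⦃X Y : D R⦄, (X ≅ Y) → X ∈ S → Y ∈ S) ∧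
  (∀ X : D R, ∀ n : ℤ, X ∈ S → X⟦n⟧ ∈ S) ∧
  (∀ T : Triangle (D R), (T ∈ distTriang (D R)) → T.obj₁ ∈ S → T.obj₃ ∈ S → T.obj₂ ∈ S)

/-- A thick subcategory: a triangulated subcategory closed under direct summands
(equivalently, retracts). -/
def IsThickSet (S : Set (D R)) : Prop :=
  IsTriangulatedSet S ∧
  ∀ ⦃X Y : D R⦄ (s : Y ⟶ X) (r : X ⟶ Y), s ≫ r = 𝟙 Y → X ∈ S → Y ∈ S

/-- The thick closure of a set of objects. -/
def thickClosure (S : Set (D R)) : Set (D R) :=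
  {X | ∀ T : Set (D R), IsThickSet T → S ⊆ T → X ∈ T}

/-- The perfect complexes: the thick closure of `R`. -/
def Perf (R : Type) [CommRing R] : Set (D R) :=
  thickClosure {sing (ModuleCat.of R R)}

/-- The support of an object of `D^b(R)`: the union of the supports of its cohomology
modules; for bounded complexes this coincides with `{p | X_p ≠ 0}`. -/
def supp (X : D R) : Set (PrimeSpectrum R) :=
  ⋃ i : ℤ, Module.support R (hmod X i)

/-- The support of a subcategory. -/
def suppSet (S : Set (D R)) : Set (PrimeSpectrum R) :=
  ⋃ X ∈ S, supp X

/-- A thick subcategory `S` of `D^b(R)` is proxy small if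
`Supp S = Supp (S ∩ D^pf(R))`. -/
def IsProxySmall (S : Set (D R)) : Prop :=
  suppSet S = suppSet (S ∩ Perf R)

/-- `X` localized at `p` is a perfect complex over `R_p`: equivalently (for `X ∈ D^b(R)`,
`R` noetherian), there is a perfect complex `P` over `R` and a morphism `P ⟶ X` whose
cone is supported away from `p`. -/
def PerfAt (X : D R) (p : PrimeSpectrum R) : Prop :=
  ∃ (P Z : D R) (f : P ⟶ X) (g : X ⟶ Z) (h : Z ⟶ P⟦(1 : ℤ)⟧),
    P ∈ Perf R ∧ (Triangle.mk f g h ∈ distTriang (D R)) ∧ p ∉ supp Z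

/-- The infinite projective dimension locus of an object:
primes `p` such that `X_p ∉ D^pf(R_p)`. -/
def ipd (X : D R) : Set (PrimeSpectrum R) :=
  {p | ¬ PerfAt X p}

/-- The infinite projective dimension locus of a subcategory. -/
def ipdSet (S : Set (D R)) : Set (PrimeSpectrum R) :=
  ⋃ X ∈ S, ipd X

/-- A noetherian local ring, with maximal ideal generated by a regular sequence,
i.e. a regular local ring. -/
def IsRegularLocalRing (A : Type) [CommRing A] : Prop :=
  IsNoetherianRing A ∧
    ∃ rs : List A, RingTheory.Sequence.IsRegular A rs ∧
      (Ideal.span {x | x ∈ rs}).IsMaximal ∧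
      ∀ I : Ideal A, I.IsMaximal → I = Ideal.span {x | x ∈ rs}

/-- The singular locus of `R`. -/
def SingLocus (R : Type) [CommRing R] : Set (PrimeSpectrum R) :=
  {p | ¬ IsRegularLocalRing (Localization.AtPrime p.asIdeal)}

/-- A local ring is a complete intersection if its completion is the quotient of a
regular local ring by an ideal generated by a regular sequence. -/
def IsCompleteIntersection (A : Type) [CommRing A] [IsLocalRing A] : Prop :=
  ∃ (Q : Type) (_ : CommRing Q), IsRegularLocalRing Q ∧
    ∃ f : Q →+* AdicCompletion (IsLocalRing.maximalIdeal A) A,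
      Function.Surjective f ∧
        ∃ rs : List Q, RingTheory.Sequence.IsRegular Q rs ∧
          RingHom.ker f = Ideal.span {x | x ∈ rs}

/-- A local ring is a hypersurface if its completion is the quotient of a
regular local ring by a single element. -/
def IsHypersurface (A : Type) [CommRing A] [IsLocalRing A] : Prop :=
  ∃ (Q : Type) (_ : CommRing Q), IsRegularLocalRing Q ∧
    ∃ f : Q →+* AdicCompletion (IsLocalRing.maximalIdeal A) A,
      Function.Surjective f ∧ ∃ x : Q, RingHom.ker f = Ideal.span {x}

/-- A local ring `A` is dominant if, for every object `X` of `D^b(A)` which is not perfect,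
the residue field of `A` belongs to `thick (A ⊕ X)`, i.e. the thick closure of `{A, X}`. -/
def IsDominant (A : Type) [CommRing A] [IsLocalRing A] : Prop :=
  ∀ X : D A, IsDb X → X ∉ Perf A →
    sing (ModuleCat.of A (IsLocalRing.ResidueField A)) ∈
      thickClosure {sing (ModuleCat.of A A), X}

/-- `R` is locally dominant if all its localizations at primes are dominant local rings. -/
def IsLocallyDominant (R : Type) [CommRing R] : Prop :=
  ∀ p : PrimeSpectrum R, IsDominant (Localization.AtPrime p.asIdeal)

/-- An object `X` of `D^b(R)` has finite injective dimension: `Ext^i(M, X) = 0` for all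
finitely generated modules `M` and all large enough `i`. -/
def FiniteInjDim (X : D R) : Prop :=
  ∃ n : ℤ, ∀ M : ModuleCat.{0} R, Module.Finite R M →
    ∀ i : ℤ, n < i → Subsingleton (sing M ⟶ X⟦i⟧)

/-- An object `X` of `D^b(R)` has finite projective dimension: `Ext^i(X, M) = 0` for all
finitely generated modules `M` and all large enough `i`. -/
def FiniteProjDim (X : D R) : Prop :=
  ∃ n : ℤ, ∀ M : ModuleCat.{0} R, Module.Finite R M →
    ∀ i : ℤ, n < i → Subsingleton (X ⟶ (sing M)⟦i⟧)

/-- A noetherian local ring is Gorenstein if `R` has finite injective dimension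
as a module over itself. -/
def IsGorenstein (A : Type) [CommRing A] : Prop :=
  IsLocalRing A ∧ IsNoetherianRing A ∧ FiniteInjDim (sing (ModuleCat.of A A))

/-- The class of morphisms of the derived category whose cone lies in `E`; the Verdier
quotient by `E` is the localization at this class. -/
def coneW {R : Type} [CommRing R] (E : Set (D R)) : MorphismProperty (D R) :=
  fun X Y f => ∃ (Z : D R) (g : Y ⟶ Z) (h : Z ⟶ X⟦(1 : ℤ)⟧),
    (Triangle.mk f g h ∈ distTriang (D R)) ∧ Z ∈ E

/-- Vanishing of `Hom(πT, πP)` in the Verdier quotient by `E` (realized as the localization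
of the derived category at morphisms with cone in `E`; for `T, P ∈ D^b(R)` this computes
the Hom group in `D^b(R)/E`). -/
def homVanish {R : Type} [CommRing R] (E : Set (D R)) (T P : D R) : Prop :=
  Subsingleton ((coneW E).Q.obj T ⟶ (coneW E).Q.obj P)

/-- `Ẽ`: the objects `T` of `D^b(R)` with `Hom_{D^b(R)/E}(πT, πP) = 0` for all perfect `P`. -/
def tildeE {R : Type} [CommRing R] (E : Set (D R)) : Set (D R) :=
  {T | IsDb T ∧ ∀ P ∈ Perf R, homVanish E T P}

end ProxyPaper

namespace CategoryTheory.ObjectProperty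

section Retracts

variable {C : Type*} [Category C] {D : Type*} [Category D]

instance (P Q : ObjectProperty C) [P.IsStableUnderRetracts] [Q.IsStableUnderRetracts] :
    (P ⊓ Q).IsStableUnderRetracts where
  of_retract h hX := ⟨P.prop_of_retract h hX.1, Q.prop_of_retract h hX.2⟩

instance [HasZeroMorphisms C] (P : ObjectProperty C) : P.leftOrthogonal.IsStableUnderRetracts where
  of_retract h hX' Y f hY := by
    rw [← Category.id_comp f, ← h.retract, Category.assoc, hX' (h.r ≫ f) hY, comp_zero]

instance (P : ObjectProperty D) [P.IsStableUnderRetracts] (F : C ⥤ D) :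
    (P.inverseImage F).IsStableUnderRetracts where
  of_retract h hX := P.prop_of_retract (h.map F) hX

end Retracts

instance {C : Type*} [Category C] {D : Type*} [Category D] {A : Type*} [AddMonoid A]
    [HasShift C A] [HasShift D A] (P : ObjectProperty C) [P.IsStableUnderShift A]
    (F : C ⥤ D) [F.CommShift A] : (P.map F).IsStableUnderShift A where
  isStableUnderShiftBy a := ⟨fun _ ⟨X, hX, ⟨e⟩⟩ =>
    ⟨X⟦a⟧, P.le_shift a _ hX, ⟨(F.commShiftIso a).app X ≪≫ (shiftFunctor D a).mapIso e⟩⟩⟩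

lemma leftOrthogonal_map_iff {C : Type*} [Category C] {D : Type*} [Category D]
    [HasZeroMorphisms D] (P : ObjectProperty C) (F : C ⥤ D) (Y : D) :
    (P.map F).leftOrthogonal Y ↔ ∀ X, P X → ∀ f : Y ⟶ F.obj X, f = 0 := by
  refine ⟨fun h X hX f => h f (P.prop_map_obj F hX), ?_⟩
  rintro h Y' f ⟨X, hX, ⟨e⟩⟩
  rw [← cancel_mono e.inv, zero_comp]
  exact h X hX _

section Verdier

variable {C : Type*} [Category C] [HasZeroObject C] [HasShift C ℤ] [Preadditive C]
  [∀ n : ℤ, (shiftFunctor C n).Additive] [Pretriangulated C] [IsTriangulated C]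
  (P : ObjectProperty C) [P.IsTriangulated]

lemma isZero_trW_Q_obj_iff [P.IsStableUnderRetracts] (X : C) :
    IsZero (P.trW.Q.obj X) ↔ P X := by
  constructor
  · intro hX
    have hid : P.trW.Q.map (𝟙 X) = P.trW.Q.map 0 := hX.eq_of_src _ _
    obtain ⟨Z, s, ⟨Z', g, h, hT, hZ'⟩, fac⟩ :=
      (MorphismProperty.map_eq_iff_postcomp P.trW.Q P.trW _ _).1 hid
    have hs : s = 0 := by simpa using fac
    subst hs
    -- the cone of a zero map `X ⟶ Z` contains `X⟦1⟧` as a direct summand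
    have : Epi h := (Triangle.mk 0 g h).epi₃ hT rfl
    have := isSplitEpi_of_epi h
    have hX1 : P (X⟦(1 : ℤ)⟧) := P.prop_of_retract ⟨section_ h, h, IsSplitEpi.id h⟩ hZ'
    exact (P.prop_shift_iff_of_isStableUnderShift X (1 : ℤ)).1 hX1
  · intro hX
    have hQ : IsIso (P.trW.Q.map (contractibleTriangle X).mor₂) :=
      Localization.inverts _ P.trW _ (trW.mk' P (contractible_distinguished X) hX)
    exact (Functor.map_isZero _ (isZero_zero C)).of_iso (@asIso _ _ _ _ _ hQ)

end Verdier

end CategoryTheory.ObjectProperty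

namespace ModuleCat

variable {R : Type*} [Ring R]

lemma finite_of_isZero {M : ModuleCat R} (hM : IsZero M) : Module.Finite R M :=
  have := subsingleton_of_isZero hM
  Module.Finite.of_finite

lemma finite_of_retract {M N : ModuleCat R} (h : Retract M N) [Module.Finite R N] :
    Module.Finite R M :=
  Module.Finite.of_surjective h.r.hom fun m => ⟨h.i m, by simp [← comp_apply]⟩

lemma finite_X₂_of_exact [IsNoetherianRing R] {S : ShortComplex (ModuleCat R)}
    (hS : S.Exact) [Module.Finite R S.X₁] [Module.Finite R S.X₃] : Module.Finite R S.X₂ := by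
  have : IsNoetherian R S.X₃ := isNoetherian_of_isNoetherianRing_of_finite R S.X₃
  refine ⟨Submodule.fg_of_fg_map_of_fg_inf_ker S.g.hom (IsNoetherian.noetherian _) ?_⟩
  rw [top_inf_eq, ← hS.moduleCat_range_eq_ker, ← Submodule.map_top]
  exact Module.Finite.fg_top.map _

end ModuleCat

namespace ProxyPaper

open ObjectProperty

variable {R : Type} [CommRing R]

lemma isDb_of_isZero {X : D R} (hX : IsZero X) : IsDb X := by
  have hz (i : ℤ) : IsZero (hmod X i) := Functor.map_isZero _ hX
  exact ⟨⟨0, 0, fun i _ => hz i⟩, fun i => ModuleCat.finite_of_isZero (hz i)⟩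

instance : IsStableUnderRetracts (IsDb (R := R)) where
  of_retract {Y X} h := by
    rintro ⟨⟨a, b, hb⟩, hf⟩
    have hr (i : ℤ) : Retract (hmod Y i) (hmod X i) :=
      h.map (DerivedCategory.homologyFunctor _ i)
    exact ⟨⟨a, b, fun i hi => IsZero.of_mono (hr i).i (hb i hi)⟩,
      fun i => have := hf i; ModuleCat.finite_of_retract (hr i)⟩

instance : IsStableUnderShift (IsDb (R := R)) ℤ where
  isStableUnderShiftBy n := ⟨fun X ⟨⟨a, b, hb⟩, hf⟩ => by
    have e (i : ℤ) : hmod (X⟦n⟧) i ≅ hmod X (n + i) :=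
      ((DerivedCategory.homologyFunctor _ 0).shiftIso n i (n + i) rfl).app X
    exact ⟨⟨a - n, b - n, fun i hi => (hb (n + i) (by omega)).of_iso (e i)⟩,
      fun i => have := hf (n + i); Module.Finite.equiv (e i).toLinearEquiv.symm⟩⟩

instance [IsNoetherianRing R] : ObjectProperty.IsTriangulated (IsDb (R := R)) where
  exists_zero := ⟨0, isZero_zero _, isDb_of_isZero (isZero_zero _)⟩
  toIsTriangulatedClosed₂ := .mk' fun T hT ⟨⟨a₁, b₁, hb₁⟩, hf₁⟩ ⟨⟨a₃, b₃, hb₃⟩, hf₃⟩ => by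
    have hS (i : ℤ) := DerivedCategory.HomologySequence.exact₂ T hT i
    refine ⟨⟨min a₁ a₃, max b₁ b₃, fun i hi => (hS i).isZero_X₂
      ((hb₁ i (by omega)).eq_of_src _ _) ((hb₃ i (by omega)).eq_of_tgt _ _)⟩, fun i => ?_⟩
    have := hf₁ i
    have := hf₃ i
    exact ModuleCat.finite_X₂_of_exact (hS i)

lemma isDb_sing (M : ModuleCat.{0} R) [Module.Finite R M] : IsDb (sing M) := by
  have e (i : ℤ) : hmod (sing M) i ≅
      ((HomologicalComplex.single _ (ComplexShape.up ℤ) 0).obj M).homology i :=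
    (DerivedCategory.homologyFunctorFactors _ i).app _
  have hz (i : ℤ) (hi : i ≠ 0) : IsZero (hmod (sing M) i) :=
    (HomologicalComplex.isZero_single_obj_homology _ 0 M i hi).of_iso (e i)
  refine ⟨⟨0, 0, fun i hi => hz i (by omega)⟩, fun i => ?_⟩
  by_cases hi : i = 0
  · subst hi
    have e₀ : hmod (sing M) 0 ≅ M :=
      e 0 ≪≫ (HomologicalComplex.homologyFunctorSingleIso _ _ 0).app M
    exact Module.Finite.equiv e₀.toLinearEquiv.symm
  · exact ModuleCat.finite_of_isZero (hz i hi)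

lemma isThickSet_setOf (P : ObjectProperty (D R)) [P.IsTriangulated] [P.IsStableUnderRetracts] :
    IsThickSet {X | P X} :=
  ⟨⟨P.prop_zero, fun _ _ e h => P.prop_of_iso e h, fun X n h => P.le_shift n X h,
    fun T hT h₁ h₃ => P.ext_of_isTriangulatedClosed₂ T hT h₁ h₃⟩,
   fun _ _ s r h hX => P.prop_of_retract ⟨s, r, h⟩ hX⟩

lemma IsThickSet.isStableUnderRetracts {E : Set (D R)} (hE : IsThickSet E) :
    IsStableUnderRetracts (· ∈ E) :=
  ⟨fun h hX => hE.2 h.i h.r h.retract hX⟩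

lemma IsThickSet.isTriangulated {E : Set (D R)} (hE : IsThickSet E) :
    ObjectProperty.IsTriangulated (· ∈ E) :=
  have := hE.isStableUnderRetracts
  { exists_zero := ⟨0, isZero_zero _, hE.1.1⟩
    isStableUnderShiftBy n := ⟨fun X hX => hE.1.2.2.1 X n hX⟩
    toIsTriangulatedClosed₂ := .mk' fun T hT h₁ h₃ => hE.1.2.2.2 T hT h₁ h₃ }

lemma isThickSet_thickClosure (S : Set (D R)) : IsThickSet (thickClosure S) :=
  ⟨⟨fun _ hS _ => hS.1.1,
    fun _ _ e hX S hS h => hS.1.2.1 e (hX S hS h),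
    fun X n hX S hS h => hS.1.2.2.1 X n (hX S hS h),
    fun T hT h₁ h₃ S hS h => hS.1.2.2.2 T hT (h₁ S hS h) (h₃ S hS h)⟩,
   fun _ _ s r hsr hX S hS h => hS.2 s r hsr (hX S hS h)⟩

lemma isDb_of_mem_perf [IsNoetherianRing R] {X : D R} (hX : X ∈ Perf R) : IsDb X :=
  hX _ (isThickSet_setOf IsDb) (by rintro _ rfl; exact isDb_sing (ModuleCat.of R R))

lemma coneW_eq_trW (E : Set (D R)) : coneW E = ObjectProperty.trW (· ∈ E) := by
  ext X Y f
  simp only [coneW, trW_iff, exists_prop]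

lemma homVanish_iff (E : Set (D R)) [ObjectProperty.IsTriangulated (· ∈ E)] (T P : D R) :
    homVanish E T P ↔ ∀ f : (trW (· ∈ E)).Q.obj T ⟶ (trW (· ∈ E)).Q.obj P, f = 0 := by
  rw [homVanish, coneW_eq_trW]
  exact subsingleton_iff_forall_eq 0

lemma mem_tildeE_iff (E : Set (D R)) [ObjectProperty.IsTriangulated (· ∈ E)] (T : D R) :
    T ∈ tildeE E ↔ IsDb T ∧ ∀ P ∈ Perf R,
      ∀ f : (trW (· ∈ E)).Q.obj T ⟶ (trW (· ∈ E)).Q.obj P, f = 0 :=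
  and_congr_right' (forall₂_congr fun P _ => homVanish_iff E T P)

lemma tildeE_eq (E : Set (D R)) [ObjectProperty.IsTriangulated (· ∈ E)] :
    tildeE E = {T | (IsDb ⊓ (ObjectProperty.map (· ∈ Perf R)
      (trW (· ∈ E)).Q).leftOrthogonal.inverseImage (trW (· ∈ E)).Q) T} := by
  ext T
  exact (mem_tildeE_iff E T).trans (and_congr_right' (leftOrthogonal_map_iff _ _ _).symm)

/-- For a thick subcategory `ℰ` of `D^pf(R)`, the subcategory
`ℰ̃ = {T ∈ D^b(R) : Hom_{D^b(R)/ℰ}(πT, πP) = 0 for all perfect P}` is a thick subcategory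
of `D^b(R)` containing `ℰ`, and `ℰ̃ ∩ D^pf(R) = ℰ`. -/
theorem stmt12 (R : Type) [CommRing R] [IsNoetherianRing R]
    (E : Set (D R)) (hE : IsThickSet E) (hEp : E ⊆ Perf R) :
    IsThickSet (tildeE E) ∧ E ⊆ tildeE E ∧ tildeE E ∩ Perf R = E := by
  have := hE.isTriangulated
  have := hE.isStableUnderRetracts
  have : ObjectProperty.IsTriangulated (· ∈ Perf R) := (isThickSet_thickClosure _).isTriangulated
  have hE_tildeE : E ⊆ tildeE E := fun T hT =>
    (mem_tildeE_iff E T).2 ⟨isDb_of_mem_perf (hEp hT),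
      fun _ _ _ => ((isZero_trW_Q_obj_iff _ T).2 hT).eq_of_src _ _⟩
  refine ⟨tildeE_eq E ▸ isThickSet_setOf _, hE_tildeE,
    subset_antisymm (fun T ⟨hT, hTp⟩ => ?_) fun T hT => ⟨hE_tildeE hT, hEp hT⟩⟩
  exact (isZero_trW_Q_obj_iff _ T).1
    ((IsZero.iff_id_eq_zero _).2 (((mem_tildeE_iff E T).1 hT).2 T hTp _))

end ProxyPaper
end
end

section
/- Let R be a commutative noetherian ring and X an object of D^b(R). Let x₁,…,xₙ generate the annihilator of the R-module End_{D^b(R)}(X), and let K be the Koszul complex on x₁,…,xₙ. Then K ⊗^L_R X is isomorphic in D^b(R) to the direct sum ⊕_{i=0}^{n} (X[i])^{⊕ C(n,i)}, where C(n,i) is the binomial coefficient. -/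
open CategoryTheory Limits Pretriangulated ZeroObject

noncomputable section

namespace ProxyPaper

variable {R : Type} [CommRing R]

/-- Multiplication by `x` as an endomorphism of a complex of `R`-modules. -/
def smulEndo (C : CochainComplex (ModuleCat.{0} R) ℤ) (x : R) : C ⟶ C where
  f i := ModuleCat.ofHom (LinearMap.lsmul R (C.X i) x)
  comm' i j _ := by
    ext m
    change (C.d i j) (x • m) = x • (C.d i j) m
    first
      | exact map_smul (C.d i j).hom x m
      | simp

/-- `koszulOn C [x₁, …, xₙ]` is the Koszul complex `K(x₁, …, xₙ) ⊗ C`, realized as an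
iterated mapping cone of multiplication maps; for `C = R` this is the Koszul complex. -/
def koszulOn (C : CochainComplex (ModuleCat.{0} R) ℤ) : List R → CochainComplex (ModuleCat.{0} R) ℤ
  | [] => C
  | x :: l => CochainComplex.mappingCone (smulEndo (koszulOn C l) x)

/-- The Koszul complex of a list of elements, as an object of the derived category. -/
def koszul (R : Type) [CommRing R] (l : List R) : D R :=
  DerivedCategory.Q.obj
    (koszulOn ((CochainComplex.singleFunctor (ModuleCat.{0} R) 0).obj (ModuleCat.of R R)) l)
instance {R : Type} [CommRing R] :
    HasFiniteBiproducts (CochainComplex (ModuleCat.{0} R) ℤ) :=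
  HasFiniteBiproducts.of_hasFiniteProducts

/-!
If `x` kills `𝟙 X` in `D(R)`, the triangle `X ⟶[x] X ⟶ cone(x) ⟶ X⟦1⟧` has zero first map and
so splits: `cone(x) ≅ X ⊞ X⟦1⟧`. The Koszul complex `K(x₁, …, xₙ) ⊗ X` is an iterated cone of
multiplications, and every iterate is still a sum of shifts of `X`, so it is still killed by each
`xᵢ`. Thus each cone doubles the sum, and Pascal's rule counts the summands in each degree.
-/

section Annihilator

variable {k : Type*} [Semiring k] {𝒞 : Type*} [Category 𝒞] [Preadditive 𝒞] [Linear k 𝒞]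
  {x : k}

lemma smul_id_eq_zero_of_iso {X Y : 𝒞} (e : X ≅ Y) (h : x • 𝟙 X = 0) : x • 𝟙 Y = 0 :=
  calc x • 𝟙 Y = e.inv ≫ (x • 𝟙 X) ≫ e.hom := by simp
    _ = 0 := by simp [h]

lemma smul_id_shift_eq_zero {A : Type*} [AddMonoid A] [HasShift 𝒞 A]
    [∀ a : A, (shiftFunctor 𝒞 a).Additive] [∀ a : A, (shiftFunctor 𝒞 a).Linear k] {X : 𝒞}
    (h : x • 𝟙 X = 0) (a : A) : x • 𝟙 (X⟦a⟧) = 0 := by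
  rw [← (shiftFunctor 𝒞 a).map_id, ← Functor.map_smul, h, Functor.map_zero]

lemma smul_id_biproduct_eq_zero {J : Type*} (f : J → 𝒞) [HasBiproduct f]
    (h : ∀ j, x • 𝟙 (f j) = 0) : x • 𝟙 (⨁ f) = 0 :=
  biproduct.hom_ext' _ _ fun j => by
    rw [Linear.comp_smul, Category.comp_id, ← Category.id_comp (biproduct.ι f j),
      ← Linear.smul_comp, h, zero_comp, comp_zero]

end Annihilator

section Biproduct

variable {𝒞 : Type*} [Category 𝒞] [Preadditive 𝒞] [HasFiniteBiproducts 𝒞]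

lemma nonempty_biproduct_iso_of_card_fiber {J K γ : Type*} [Fintype J] [Fintype K]
    [DecidableEq γ] (F : γ → 𝒞) (d : J → γ) (e : K → γ)
    (h : ∀ c, Fintype.card {j // d j = c} = Fintype.card {k // e k = c}) :
    Nonempty ((⨁ fun j => F (d j)) ≅ ⨁ fun k => F (e k)) :=
  let σ : J ≃ K := Equiv.ofFiberEquiv fun c => Fintype.equivOfCardEq (h c)
  ⟨biproduct.whiskerEquiv σ fun j => eqToIso (congrArg F (Equiv.ofFiberEquiv_map _ j))⟩

def biproductSumIso [HasBinaryBiproducts 𝒞] {J K : Type*} [Finite J] [Finite K]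
    (f : J → 𝒞) (g : K → 𝒞) : (⨁ Sum.elim f g) ≅ (⨁ f) ⊞ (⨁ g) :=
  (biproduct.isLimit (Sum.elim f g)).conePointUniqueUpToIso
    (Fan.combPairIsLimit (biproduct.isLimit f) (biproduct.isLimit g)
      (BinaryBiproduct.isLimit (⨁ f) (⨁ g)))

def mapBiproductShiftIso {𝒟 : Type*} [Category 𝒟] [Preadditive 𝒟] [HasFiniteBiproducts 𝒟]
    [HasShift 𝒞 ℤ] [HasShift 𝒟 ℤ] {J : Type} [Fintype J] (F : 𝒞 ⥤ 𝒟) [F.CommShift ℤ]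
    [F.Additive] (X : 𝒞) (a : J → ℤ) :
    F.obj (⨁ fun j => X⟦a j⟧) ≅ ⨁ fun j => (F.obj X)⟦a j⟧ :=
  F.mapBiproduct _ ≪≫ biproduct.mapIso fun j => (F.commShiftIso (a j)).app X

end Biproduct

lemma card_fiber_sumElim {J K γ : Type*} [Fintype J] [Fintype K] [DecidableEq γ]
    (d : J → γ) (e : K → γ) (c : γ) :
    Fintype.card {s // Sum.elim d e s = c} =
      Fintype.card {j // d j = c} + Fintype.card {k // e k = c} := by
  rw [Fintype.card_congr Equiv.subtypeSum, Fintype.card_sum]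
  rfl

lemma card_fiber_add_one {J : Type*} [Fintype J] (d : J → ℕ) (i : ℕ) :
    Fintype.card {j // d j + 1 = i + 1} = Fintype.card {j // d j = i} :=
  Fintype.card_congr (Equiv.subtypeEquivRight fun _ => Nat.add_right_cancel_iff)

lemma card_fiber_sigma_choose (n k : ℕ) :
    Fintype.card {j : Σ i : Fin (n + 1), Fin (n.choose i) // (j.1 : ℕ) = k} = n.choose k := by
  calc _ = ∑ i : Fin (n + 1), if (i : ℕ) = k then n.choose i else 0 := by
        rw [Fintype.card_subtype, Finset.card_filter, Fintype.sum_sigma]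
        refine Finset.sum_congr rfl fun i _ => ?_
        split_ifs <;> simp [*]
    _ = n.choose k := by
      rw [Fin.sum_univ_eq_sum_range (fun i => if i = k then n.choose i else 0),
        Finset.sum_ite_eq', ite_eq_left_iff, Finset.mem_range, not_lt]
      exact fun hk => (Nat.choose_eq_zero_of_lt (Nat.lt_of_succ_le hk)).symm

section BinomialShiftSum

variable {𝒞 : Type*} [Category 𝒞] [Preadditive 𝒞] [HasFiniteBiproducts 𝒞] [HasShift 𝒞 ℤ]

/-- `Y ≅ ⨁ᵢ (X⟦i⟧)^{⊕ C(n,i)}`, with the summands indexed by any finite type `J` carrying a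
degree function `d` that takes each value `i` exactly `C(n,i)` times. -/
def IsBinomialShiftSum (X Y : 𝒞) (n : ℕ) : Prop :=
  ∃ (J : Type) (_ : Fintype J) (d : J → ℕ),
    (∀ i, Fintype.card {j // d j = i} = n.choose i) ∧
      Nonempty (Y ≅ ⨁ fun j => X⟦(d j : ℤ)⟧)

namespace IsBinomialShiftSum

variable {X Y : 𝒞} {n : ℕ}

lemma self (X : 𝒞) : IsBinomialShiftSum X X 0 := by
  refine ⟨Unit, inferInstance, fun _ => 0, fun i => ?_,
    ⟨((shiftFunctorZero 𝒞 ℤ).app X).symm ≪≫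
      (biproductUniqueIso fun _ : Unit => X⟦((0 : ℕ) : ℤ)⟧).symm⟩⟩
  cases i <;> simp

lemma of_iso (h : IsBinomialShiftSum X Y n) {Y' : 𝒞} (e : Y ≅ Y') :
    IsBinomialShiftSum X Y' n := by
  obtain ⟨J, _, d, hd, ⟨f⟩⟩ := h
  exact ⟨J, _, d, hd, ⟨e.symm ≪≫ f⟩⟩

lemma smul_id_eq_zero {k : Type*} [Semiring k] [Linear k 𝒞]
    [∀ a : ℤ, (shiftFunctor 𝒞 a).Additive] [∀ a : ℤ, (shiftFunctor 𝒞 a).Linear k]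
    (h : IsBinomialShiftSum X Y n) {x : k} (hX : x • 𝟙 X = 0) : x • 𝟙 Y = 0 := by
  obtain ⟨J, _, d, -, ⟨e⟩⟩ := h
  exact smul_id_eq_zero_of_iso e.symm
    (smul_id_biproduct_eq_zero _ fun j => smul_id_shift_eq_zero hX _)

lemma biprod_shift_one [HasBinaryBiproducts 𝒞] [∀ a : ℤ, (shiftFunctor 𝒞 a).Additive]
    (h : IsBinomialShiftSum X Y n) : IsBinomialShiftSum X (Y ⊞ Y⟦(1 : ℤ)⟧) (n + 1) := by
  obtain ⟨J, _, d, hd, ⟨e⟩⟩ := h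
  refine ⟨J ⊕ J, inferInstance, Sum.elim d (fun j => d j + 1), fun i => ?_, ⟨?_⟩⟩
  · rw [card_fiber_sumElim, hd]
    rcases i with _ | i
    · simp
    · rw [card_fiber_add_one, hd, Nat.choose_succ_succ', add_comm]
  · have shiftSum :
        (⨁ fun j => X⟦(d j : ℤ)⟧)⟦(1 : ℤ)⟧ ≅ ⨁ fun j => X⟦((d j + 1 : ℕ) : ℤ)⟧ :=
      (shiftFunctor 𝒞 (1 : ℤ)).mapBiproduct _ ≪≫ biproduct.mapIso fun j =>
        ((shiftFunctorAdd' 𝒞 (d j : ℤ) 1 _ (by push_cast; rfl)).app X).symm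
    exact biprod.mapIso e ((shiftFunctor 𝒞 (1 : ℤ)).mapIso e) ≪≫
      biprod.mapIso (Iso.refl _) shiftSum ≪≫ (biproductSumIso _ _).symm ≪≫
      eqToIso (by congr 1; funext s; cases s <;> rfl)

lemma nonempty_iso_biproduct (h : IsBinomialShiftSum X Y n) :
    Nonempty (Y ≅ ⨁ fun j : Σ i : Fin (n + 1), Fin (n.choose i) => X⟦(j.1.1 : ℤ)⟧) := by
  obtain ⟨J, _, d, hd, ⟨e⟩⟩ := h
  obtain ⟨f⟩ := nonempty_biproduct_iso_of_card_fiber (fun i : ℕ => X⟦(i : ℤ)⟧) d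
    (fun j : Σ i : Fin (n + 1), Fin (n.choose i) => (j.1 : ℕ)) fun i => by
      rw [hd, card_fiber_sigma_choose]
  exact ⟨e ≪≫ f⟩

end IsBinomialShiftSum

end BinomialShiftSum

lemma nonempty_iso_biprod_of_mor₁_eq_zero {𝒞 : Type*} [Category 𝒞] [Preadditive 𝒞]
    [HasZeroObject 𝒞] [HasShift 𝒞 ℤ] [∀ n : ℤ, (shiftFunctor 𝒞 n).Additive]
    [Pretriangulated 𝒞] (T : Triangle 𝒞) (hT : T ∈ distTriang 𝒞) (h : T.mor₁ = 0) :
    Nonempty (T.obj₃ ≅ T.obj₂ ⊞ T.obj₁⟦(1 : ℤ)⟧) :=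
  let ⟨e, _⟩ := exists_iso_binaryBiproduct_of_distTriang _ (rot_of_distTriang _ hT)
    (by show -T.mor₁⟦(1 : ℤ)⟧' = 0; simp [h])
  ⟨e⟩

lemma nonempty_iso_mappingCone_of_map_eq_zero {𝒜 : Type*} [Category 𝒜] [Abelian 𝒜]
    [HasDerivedCategory 𝒜] {K L : CochainComplex 𝒜 ℤ} (φ : K ⟶ L)
    (hφ : DerivedCategory.Q.map φ = 0) :
    Nonempty (DerivedCategory.Q.obj (CochainComplex.mappingCone φ) ≅
      DerivedCategory.Q.obj L ⊞ (DerivedCategory.Q.obj K)⟦(1 : ℤ)⟧) :=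
  nonempty_iso_biprod_of_mor₁_eq_zero _ (DerivedCategory.mappingCone_triangle_distinguished φ) hφ

lemma smulEndo_eq_smul_id (C : CochainComplex (ModuleCat.{0} R) ℤ) (x : R) :
    smulEndo C x = x • 𝟙 C :=
  rfl

lemma Q_map_smulEndo (C : CochainComplex (ModuleCat.{0} R) ℤ) (x : R) :
    DerivedCategory.Q.map (smulEndo C x) = x • 𝟙 (DerivedCategory.Q.obj C) := by
  rw [smulEndo_eq_smul_id, Functor.map_smul, DerivedCategory.Q.map_id]

lemma isBinomialShiftSum_koszulOn (C : CochainComplex (ModuleCat.{0} R) ℤ) (l : List R)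
    (hl : ∀ x ∈ l, x • 𝟙 (DerivedCategory.Q.obj C) = 0) :
    IsBinomialShiftSum (DerivedCategory.Q.obj C) (DerivedCategory.Q.obj (koszulOn C l))
      l.length := by
  induction l with
  | nil => exact .self _
  | cons x l ih =>
    have hK := ih fun y hy => hl y (List.mem_cons_of_mem x hy)
    obtain ⟨e⟩ := nonempty_iso_mappingCone_of_map_eq_zero (smulEndo (koszulOn C l) x)
      (by rw [Q_map_smulEndo]; exact hK.smul_id_eq_zero (hl x List.mem_cons_self))
    exact hK.biprod_shift_one.of_iso e.symm

theorem stmt19_general (R : Type) [CommRing R]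
    (C : CochainComplex (ModuleCat.{0} R) ℤ)
    (l : List R)
    (hann : ∀ x : R,
      DerivedCategory.Q.map (smulEndo C x) = 0 ↔ x ∈ Ideal.span {y : R | y ∈ l}) :
    Nonempty (DerivedCategory.Q.obj (koszulOn C l) ≅
      DerivedCategory.Q.obj
        (⨁ fun j : (Σ i : Fin (l.length + 1), Fin (l.length.choose i.1)) =>
          (C⟦(j.1.1 : ℤ)⟧ : CochainComplex (ModuleCat.{0} R) ℤ))) := by
  have hC : ∀ x ∈ l, x • 𝟙 (DerivedCategory.Q.obj C) = 0 := fun x hx => by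
    rw [← Q_map_smulEndo]
    exact (hann x).2 (Ideal.subset_span hx)
  obtain ⟨e⟩ := (isBinomialShiftSum_koszulOn C l hC).nonempty_iso_biproduct
  exact ⟨e ≪≫ (mapBiproductShiftIso DerivedCategory.Q C _).symm⟩

/-- Let `X ∈ D^b(R)` (represented by a complex `C`), let `x₁, …, xₙ`
generate the annihilator of the `R`-module `End_{D^b(R)}(X)` (i.e. `x • 𝟙 X = 0` exactly
for `x` in the span), and let `K` be the Koszul complex on `x₁, …, xₙ`. Then
`K ⊗^L_R X ≅ ⊕_{i=0}^{n} (X[i])^{⊕ C(n,i)}` in `D^b(R)`. Here `K ⊗^L_R X` is computed as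
the iterated mapping cone `koszulOn C l`. -/
theorem stmt19 (R : Type) [CommRing R] [IsNoetherianRing R]
    (C : CochainComplex (ModuleCat.{0} R) ℤ) (hC : IsDb (DerivedCategory.Q.obj C))
    (l : List R)
    (hann : ∀ x : R,
      DerivedCategory.Q.map (smulEndo C x) = 0 ↔ x ∈ Ideal.span {y : R | y ∈ l}) :
    Nonempty (DerivedCategory.Q.obj (koszulOn C l) ≅
      DerivedCategory.Q.obj
        (⨁ fun j : (Σ i : Fin (l.length + 1), Fin (l.length.choose i.1)) =>
          (C⟦(j.1.1 : ℤ)⟧ : CochainComplex (ModuleCat.{0} R) ℤ))) :=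
  stmt19_general R C l hann

end ProxyPaper
end
end
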